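/- arXiv:1012.4666 — 5 statements merged into one kernel-verified Lean document; each statement's English description precedes it below -/
import Mathlib

section
/- For every real η > 0 one has (η − sin η)/(η − sin η · cos η) > 1/4. -/
/-!
Clearing the denominator, the claim is `3η - 4 sin η + sin η cos η > 0`. The left side vanishes
at `0` and has derivative `3 - 4 cos η + cos 2η = 2 (1 - cos η)²`, so it increases strictly on
`[0, π]`; beyond `π` the term `3η > 9` dominates trivially.
-/

open Real Set

lemma hasDerivAt_three_mul_sub_four_mul_sin_add_sin_mul_cos (x : ℝ) :
    HasDerivAt (fun x => 3 * x - 4 * sin x + sin x * cos x) (2 * (1 - cos x) ^ 2) x := by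
  refine ((((hasDerivAt_id x).const_mul 3).sub ((hasDerivAt_sin x).const_mul 4)).add
    ((hasDerivAt_sin x).mul (hasDerivAt_cos x))).congr_deriv ?_
  linear_combination -sin_sq_add_cos_sq x

lemma strictMonoOn_three_mul_sub_four_mul_sin_add_sin_mul_cos :
    StrictMonoOn (fun x => 3 * x - 4 * sin x + sin x * cos x) (Icc 0 π) := by
  refine strictMonoOn_of_deriv_pos (convex_Icc 0 π)
    (fun x _ => (hasDerivAt_three_mul_sub_four_mul_sin_add_sin_mul_cos x).continuousAt
      |>.continuousWithinAt) fun x hx => ?_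
  rw [interior_Icc] at hx
  rw [(hasDerivAt_three_mul_sub_four_mul_sin_add_sin_mul_cos x).deriv]
  have hcos : cos x < 1 := cos_zero ▸ cos_lt_cos_of_nonneg_of_le_pi le_rfl hx.2.le hx.1
  nlinarith

lemma three_mul_sub_four_mul_sin_add_sin_mul_cos_pos {x : ℝ} (hx : 0 < x) :
    0 < 3 * x - 4 * sin x + sin x * cos x := by
  rcases le_or_gt x π with hxπ | hπx
  · simpa using strictMonoOn_three_mul_sub_four_mul_sin_add_sin_mul_cos
      ⟨le_rfl, pi_pos.le⟩ ⟨hx.le, hxπ⟩ hx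
  · have hsin2 : -1 ≤ 2 * sin x * cos x := sin_two_mul x ▸ neg_one_le_sin (2 * x)
    nlinarith [sin_le_one x, pi_gt_three]

lemma sin_mul_cos_lt_self {x : ℝ} (hx : 0 < x) : sin x * cos x < x := by
  have h := sin_lt (by positivity : 0 < 2 * x)
  rw [sin_two_mul] at h
  linarith

theorem chord_arc_ratio_gt_quarter (η : ℝ) (hη : 0 < η) :
    (η - Real.sin η) / (η - Real.sin η * Real.cos η) > 1 / 4 := by
  have hden : 0 < η - sin η * cos η := sub_pos.mpr (sin_mul_cos_lt_self hη)
  rw [gt_iff_lt, div_lt_div_iff₀ (by norm_num) hden]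
  linarith [three_mul_sub_four_mul_sin_add_sin_mul_cos_pos hη]
end

section
/- For N ≥ 3, define β_N = (sin(π/N) − (π/N)·cos(π/N)) / (sin(π/N)·cos(π/N) − (π/N)·cos(2π/N)). Then the sequence (β_N) is strictly decreasing in N and converges to 1/4 as N → ∞. -/
/-!
Write `β_N = F (π / N)` with `F = g / h`, `g x = sin x - x cos x` and
`h x = sin x cos x - x cos 2x`.
Both vanish at `0`, with `g' x = x sin x` and `h' x = 2x sin 2x`, so L'Hôpital gives
`F → lim 1 / (4 cos x) = 1 / 4` as `x → 0⁺`, and `g, h > 0` on `(0, π/2]`. The numerator of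
`F'` is `x sin x · ψ(2x) / 2` with `ψ u = u cos u + 2u - 3 sin u`; since `ψ 0 = 0` and
`ψ' u = 4 sin (u/2) · g (u/2) > 0`, `F` is strictly increasing on `(0, π/2]`, while `π / N`
strictly decreases.
-/

noncomputable def betaSeq (N : ℕ) : ℝ :=
  (Real.sin (Real.pi / N) - (Real.pi / N) * Real.cos (Real.pi / N)) /
    (Real.sin (Real.pi / N) * Real.cos (Real.pi / N) - (Real.pi / N) * Real.cos (2 * Real.pi / N))

open Real Set Filter Topology

lemma pos_of_hasDerivAt_pos_of_eq_zero {f f' : ℝ → ℝ} {a b x : ℝ}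
    (hf : ∀ y ∈ Icc a b, HasDerivAt f (f' y) y) (hf' : ∀ y ∈ Ioo a b, 0 < f' y) (hfa : f a = 0)
    (hx : x ∈ Ioc a b) : 0 < f x := by
  have hmono : StrictMonoOn f (Icc a b) :=
    strictMonoOn_of_hasDerivWithinAt_pos (convex_Icc a b)
      (fun y hy => (hf y hy).continuousAt.continuousWithinAt)
      (fun y hy => (hf y (interior_subset hy)).hasDerivWithinAt)
      (by rwa [interior_Icc])
  simpa [hfa] using hmono (left_mem_Icc.2 (hx.1.le.trans hx.2)) (Ioc_subset_Icc_self hx) hx.1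

noncomputable def betaNum (x : ℝ) : ℝ := sin x - x * cos x

noncomputable def betaDen (x : ℝ) : ℝ := sin x * cos x - x * cos (2 * x)

noncomputable def betaFun (x : ℝ) : ℝ := betaNum x / betaDen x

noncomputable def betaDerivFactor (u : ℝ) : ℝ := u * cos u + 2 * u - 3 * sin u

lemma betaSeq_eq_betaFun (N : ℕ) : betaSeq N = betaFun (π / N) := by
  rw [betaSeq, betaFun, betaNum, betaDen, mul_div_assoc]

lemma hasDerivAt_betaNum (x : ℝ) : HasDerivAt betaNum (x * sin x) x := by
  unfold betaNum
  exact ((hasDerivAt_sin x).sub ((hasDerivAt_id' x).mul (hasDerivAt_cos x))).congr_deriv (by ring)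

lemma hasDerivAt_betaDen (x : ℝ) : HasDerivAt betaDen (2 * x * sin (2 * x)) x := by
  have hcos2 : HasDerivAt (fun y => cos (2 * y)) (-sin (2 * x) * 2) x :=
    (hasDerivAt_cos (2 * x)).comp x ((hasDerivAt_id' x).const_mul 2 |>.congr_deriv (mul_one 2))
  unfold betaDen
  refine (((hasDerivAt_sin x).mul (hasDerivAt_cos x)).sub
    ((hasDerivAt_id' x).mul hcos2)).congr_deriv ?_
  simp only [cos_two_mul', sin_two_mul]
  ring

lemma hasDerivAt_betaDerivFactor (u : ℝ) :
    HasDerivAt betaDerivFactor (4 * sin (u / 2) * betaNum (u / 2)) u := by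
  unfold betaDerivFactor
  refine ((((hasDerivAt_id' u).mul (hasDerivAt_cos u)).add
    ((hasDerivAt_id' u).const_mul 2)).sub ((hasDerivAt_sin u).const_mul 3)).congr_deriv ?_
  obtain ⟨v, rfl⟩ : ∃ v, u = 2 * v := ⟨u / 2, by ring⟩
  have hsq := sin_sq_add_cos_sq v
  simp only [betaNum, mul_div_cancel_left₀ v two_ne_zero, sin_two_mul, cos_two_mul]
  linear_combination (-4 : ℝ) * hsq

lemma betaNum_pos {x : ℝ} (hx : x ∈ Ioc 0 π) : 0 < betaNum x :=
  pos_of_hasDerivAt_pos_of_eq_zero (fun y _ => hasDerivAt_betaNum y)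
    (fun y hy => mul_pos hy.1 (sin_pos_of_pos_of_lt_pi hy.1 hy.2)) (by simp [betaNum]) hx

lemma betaDen_pos {x : ℝ} (hx : x ∈ Ioc 0 (π / 2)) : 0 < betaDen x :=
  pos_of_hasDerivAt_pos_of_eq_zero (fun y _ => hasDerivAt_betaDen y)
    (fun y hy => by
      have := sin_pos_of_pos_of_lt_pi (by linarith [hy.1] : 0 < 2 * y) (by linarith [hy.2])
      have := hy.1
      positivity)
    (by simp [betaDen]) hx

lemma betaDerivFactor_pos {u : ℝ} (hu : u ∈ Ioc 0 (2 * π)) : 0 < betaDerivFactor u :=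
  pos_of_hasDerivAt_pos_of_eq_zero (fun y _ => hasDerivAt_betaDerivFactor y)
    (fun y hy => by
      have hy' : y / 2 ∈ Ioo 0 π := ⟨by linarith [hy.1], by linarith [hy.2]⟩
      have := sin_pos_of_pos_of_lt_pi hy'.1 hy'.2
      have := betaNum_pos (Ioo_subset_Ioc_self hy')
      positivity)
    (by simp [betaDerivFactor]) hu

lemma hasDerivAt_betaFun {x : ℝ} (hx : betaDen x ≠ 0) :
    HasDerivAt betaFun (x * sin x * betaDerivFactor (2 * x) / (2 * betaDen x ^ 2)) x := by
  refine ((hasDerivAt_betaNum x).div (hasDerivAt_betaDen x) hx).congr_deriv ?_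
  simp only [betaNum, betaDen, betaDerivFactor, sin_two_mul, cos_two_mul]
  field_simp
  ring

lemma betaFun_strictMonoOn : StrictMonoOn betaFun (Ioc 0 (π / 2)) := by
  have hderiv : ∀ x ∈ Ioc 0 (π / 2), HasDerivAt betaFun _ x :=
    fun x hx => hasDerivAt_betaFun (betaDen_pos hx).ne'
  refine strictMonoOn_of_hasDerivWithinAt_pos (convex_Ioc 0 (π / 2))
    (fun x hx => (hderiv x hx).continuousAt.continuousWithinAt)
    (fun x hx => (hderiv x (interior_subset hx)).hasDerivWithinAt) (fun x hx => ?_)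
  rw [interior_Ioc] at hx
  have hsin := sin_pos_of_pos_of_lt_pi hx.1 (by linarith [hx.2, pi_pos])
  have hfactor : 0 < betaDerivFactor (2 * x) :=
    betaDerivFactor_pos ⟨by linarith [hx.1], by linarith [hx.2, pi_pos]⟩
  have hden := betaDen_pos (Ioo_subset_Ioc_self hx)
  have hx0 := hx.1
  positivity

lemma tendsto_betaFun_nhdsGT_zero : Tendsto betaFun (𝓝[>] 0) (𝓝 (1 / 4)) := by
  have hnear : Ioo 0 (π / 2) ∈ 𝓝[>] (0 : ℝ) := Ioo_mem_nhdsGT (by positivity)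
  have hratio :
      (fun x => 1 / (4 * cos x)) =ᶠ[𝓝[>] 0] fun x => x * sin x / (2 * x * sin (2 * x)) := by
    filter_upwards [hnear] with x hx
    have := sin_pos_of_pos_of_lt_pi hx.1 (by linarith [hx.2, pi_pos])
    have := cos_pos_of_mem_Ioo ⟨by linarith [hx.1, pi_pos], hx.2⟩
    have := hx.1
    rw [sin_two_mul]
    field_simp
    ring
  have hlim : Tendsto (fun x => 1 / (4 * cos x)) (𝓝[>] 0) (𝓝 (1 / 4)) := by
    have hcont : ContinuousAt (fun x => 1 / (4 * cos x)) 0 :=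
      continuousAt_const.div (continuousAt_const.mul continuous_cos.continuousAt) (by simp)
    simpa using hcont.tendsto.mono_left nhdsWithin_le_nhds
  refine HasDerivAt.lhopital_zero_nhdsGT (.of_forall hasDerivAt_betaNum)
    (.of_forall hasDerivAt_betaDen) ?_ ?_ ?_ (hlim.congr' hratio)
  · filter_upwards [hnear] with x hx
    have := sin_pos_of_pos_of_lt_pi (by linarith [hx.1] : 0 < 2 * x) (by linarith [hx.2])
    have := hx.1
    positivity
  · simpa [betaNum] using (hasDerivAt_betaNum 0).continuousAt.tendsto.mono_left nhdsWithin_le_nhds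
  · simpa [betaDen] using (hasDerivAt_betaDen 0).continuousAt.tendsto.mono_left nhdsWithin_le_nhds

lemma pi_div_natCast_mem_Ioc {N : ℕ} (hN : 2 ≤ N) : π / N ∈ Ioc 0 (π / 2) := by
  have hN' : (2 : ℝ) ≤ N := by exact_mod_cast hN
  exact ⟨by positivity, div_le_div_of_nonneg_left pi_pos.le two_pos hN'⟩

lemma tendsto_const_div_natCast_nhdsGT_zero {c : ℝ} (hc : 0 < c) :
    Tendsto (fun N : ℕ => c / N) atTop (𝓝[>] 0) :=
  tendsto_nhdsWithin_iff.2 ⟨tendsto_const_div_atTop_nhds_zero_nat c,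
    eventually_atTop.2 ⟨1, fun _ hN => div_pos hc (Nat.cast_pos.2 hN)⟩⟩

theorem betaSeq_strictAnti_and_tendsto :
    StrictAntiOn betaSeq {N : ℕ | 3 ≤ N} ∧
      Filter.Tendsto betaSeq Filter.atTop (nhds (1 / 4)) := by
  constructor
  · intro N hN M hM hNM
    rw [betaSeq_eq_betaFun, betaSeq_eq_betaFun]
    refine betaFun_strictMonoOn (pi_div_natCast_mem_Ioc (by grind))
      (pi_div_natCast_mem_Ioc (by grind)) ?_
    exact div_lt_div_of_pos_left pi_pos (Nat.cast_pos.2 (by grind)) (by exact_mod_cast hNM)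
  · simpa only [Function.comp_def, ← betaSeq_eq_betaFun] using
      tendsto_betaFun_nhdsGT_zero.comp (tendsto_const_div_natCast_nhdsGT_zero pi_pos)
end

section
/- For an isosceles triangle inscribed in the circle of radius b whose central angles are x, x, π − 2x with x ∈ [π/3, π/2), the function J_λ = λ b² (sin x cos x · 2 + sin(π−2x)cos(π−2x)) − 2b(2 sin x + sin(π−2x)) is strictly decreasing in x on [π/3, π/2) whenever λ ≥ 1/b. -/
theorem isosceles_J_strictAnti (b lam : ℝ) (hb : 0 < b) (hlam : lam ≥ 1 / b) :
    StrictAntiOn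
      (fun x : ℝ =>
        lam * b ^ 2 *
            (2 * Real.sin x * Real.cos x +
              Real.sin (Real.pi - 2 * x) * Real.cos (Real.pi - 2 * x)) -
          2 * b * (2 * Real.sin x + Real.sin (Real.pi - 2 * x)))
      (Set.Ico (Real.pi / 3) (Real.pi / 2)) := by
  have hlb : 1 ≤ lam * b := by
    rw [ge_iff_le, div_le_iff₀ hb] at hlam
    linarith
  apply strictAntiOn_of_deriv_neg (convex_Ico _ _)
  · fun_prop
  · intro x hx
    rw [interior_Ico] at hx
    obtain ⟨h1, h2⟩ := hx
    have hu : HasDerivAt (fun x : ℝ => Real.pi - 2 * x) (-2) x := by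
      simpa using ((hasDerivAt_id x).const_mul 2).const_sub Real.pi
    have hs : HasDerivAt Real.sin (Real.cos x) x := Real.hasDerivAt_sin x
    have hc : HasDerivAt Real.cos (-Real.sin x) x := Real.hasDerivAt_cos x
    have hs2 : HasDerivAt (fun x : ℝ => Real.sin (Real.pi - 2 * x))
        (Real.cos (Real.pi - 2 * x) * (-2)) x :=
      (Real.hasDerivAt_sin _).comp x hu
    have hc2 : HasDerivAt (fun x : ℝ => Real.cos (Real.pi - 2 * x))
        (-Real.sin (Real.pi - 2 * x) * (-2)) x :=
      (Real.hasDerivAt_cos _).comp x hu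
    have hd : HasDerivAt
        (fun x : ℝ =>
          lam * b ^ 2 *
              (2 * Real.sin x * Real.cos x +
                Real.sin (Real.pi - 2 * x) * Real.cos (Real.pi - 2 * x)) -
            2 * b * (2 * Real.sin x + Real.sin (Real.pi - 2 * x)))
        (lam * b ^ 2 *
            ((2 * Real.cos x * Real.cos x + 2 * Real.sin x * (-Real.sin x)) +
              (Real.cos (Real.pi - 2 * x) * (-2) * Real.cos (Real.pi - 2 * x) +
                Real.sin (Real.pi - 2 * x) * (-Real.sin (Real.pi - 2 * x) * (-2)))) -
          2 * b * (2 * Real.cos x + Real.cos (Real.pi - 2 * x) * (-2))) x := by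
      exact ((((hs.const_mul 2).mul hc).add (hs2.mul hc2)).const_mul (lam * b ^ 2)).sub
        (((hs.const_mul 2).add hs2).const_mul (2 * b))
    rw [hd.deriv]
    have hpi := Real.pi_pos
    have hcx : Real.cos x < 1 / 2 := by
      have h := Real.cos_lt_cos_of_nonneg_of_le_pi (by positivity : (0:ℝ) ≤ Real.pi / 3)
        (by linarith) h1
      rwa [Real.cos_pi_div_three] at h
    have hcx0 : 0 < Real.cos x :=
      Real.cos_pos_of_mem_Ioo ⟨by linarith, h2⟩
    have hsq : Real.sin x ^ 2 = 1 - Real.cos x ^ 2 := Real.sin_sq x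
    rw [Real.sin_pi_sub, Real.cos_pi_sub, Real.sin_two_mul, Real.cos_two_mul]
    set c := Real.cos x with hcdef
    have hDeq :
        lam * b ^ 2 *
            (2 * c * c + 2 * Real.sin x * -Real.sin x +
              (-(2 * c ^ 2 - 1) * -2 * -(2 * c ^ 2 - 1) +
                2 * Real.sin x * c * (-(2 * Real.sin x * c) * -2))) -
          2 * b * (2 * c + -(2 * c ^ 2 - 1) * -2) =
        4 * b * (2 * c - 1) * (lam * b * ((2 * c + 1) * (1 - c ^ 2)) - (c + 1)) := by
      linear_combination (2 * lam * b ^ 2 * (4 * c ^ 2 - 1)) * (Real.sin_sq_add_cos_sq x)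
    rw [hDeq]
    have hbr : 0 < lam * b * ((2 * c + 1) * (1 - c ^ 2)) - (c + 1) := by
      have h5 : 0 < (2 * c + 1) * (1 - c ^ 2) := by nlinarith
      nlinarith [mul_le_mul_of_nonneg_right hlb (le_of_lt h5), mul_pos hcx0 (by linarith : (0:ℝ) < 1 - 2 * c)]
    have h6 : 0 < 4 * b * (1 - 2 * c) := by nlinarith
    nlinarith [mul_pos h6 hbr]
end

section
/- Let λ, b > 0 with 1 ≤ 1/(λb) ≤ 3/2, and define φ_λ(x) = arccos(1/(λb) − cos x) on its natural domain. Then φ_λ is concave on the set where 0 < φ_λ(x) < x < π/2. -/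
/-!
Inside the square `[0, π/2]²`, the hypograph of `x ↦ arccos (c - cos x)` is the superlevel set
`{(x, y) | c ≤ cos x + cos y}` of a concave function, hence convex. Concretely,
concavity of `cos` applied to the two points `x, y` and to their values `u, v` gives
`c - cos (a x + b y) ≤ a cos u + b cos v ≤ cos (a u + b v)`, and `arccos` is antitone.
On the set of the theorem, `cos x` ranges over `(c - 1, c / 2)`, so that set is an open interval.
-/

open Real Set

namespace Real

theorem arccos_lt_iff_cos_lt {t x : ℝ} (ht : t ∈ Icc (-1) 1) (hx₀ : 0 ≤ x) (hxπ : x ≤ π) :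
    arccos t < x ↔ cos x < t := by
  simpa only [arccos_cos hx₀ hxπ] using
    strictAntiOn_arccos.lt_iff_gt ht ⟨neg_one_le_cos x, cos_le_one x⟩

theorem lt_arccos_iff_lt_cos {t x : ℝ} (ht : t ∈ Icc (-1) 1) (hx₀ : 0 ≤ x) (hxπ : x ≤ π) :
    x < arccos t ↔ t < cos x := by
  simpa only [arccos_cos hx₀ hxπ] using
    strictAntiOn_arccos.lt_iff_gt ⟨neg_one_le_cos x, cos_le_one x⟩ ht

theorem concaveOn_arccos_sub_cos {c : ℝ} {s : Set ℝ} (hs : Convex ℝ s)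
    (hs_sub : s ⊆ Icc 0 (π / 2)) (hc : ∀ x ∈ s, c - cos x ∈ Icc 0 1) :
    ConcaveOn ℝ s fun x => arccos (c - cos x) := by
  have hcos : ConcaveOn ℝ (Icc 0 (π / 2)) cos :=
    strictConcaveOn_cos_Icc.concaveOn.subset (Icc_subset_Icc (by linarith [pi_pos]) le_rfl)
      (convex_Icc _ _)
  have hmem : ∀ z ∈ s, arccos (c - cos z) ∈ Icc 0 (π / 2) := fun z hz =>
    ⟨arccos_nonneg _, arccos_le_pi_div_two.2 (hc z hz).1⟩
  have hcos_arccos : ∀ z ∈ s, cos (arccos (c - cos z)) = c - cos z := fun z hz =>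
    cos_arccos (by linarith [(hc z hz).1]) (hc z hz).2
  refine ⟨hs, fun x hx y hy a b ha hb hab => ?_⟩
  set u := arccos (c - cos x)
  set v := arccos (c - cos y)
  have hw : a • u + b • v ∈ Icc 0 (π / 2) := convex_Icc _ _ (hmem x hx) (hmem y hy) ha hb hab
  have hxy := hcos.2 (hs_sub hx) (hs_sub hy) ha hb hab
  have huv := hcos.2 (hmem x hx) (hmem y hy) ha hb hab
  rw [hcos_arccos x hx, hcos_arccos y hy] at huv
  simp only [smul_eq_mul] at hw hxy huv ⊢
  calc a * u + b * v = arccos (cos (a * u + b * v)) :=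
        (arccos_cos hw.1 (hw.2.trans (by linarith [pi_pos]))).symm
    _ ≤ arccos (c - cos (a * x + b * y)) := antitone_arccos (by
        have hc_split : c = a * c + b * c := by rw [← add_mul, hab, one_mul]
        linarith)

theorem setOf_arccos_sub_cos_eq_Ioo {c : ℝ} (h1 : 1 ≤ c) (h2 : c ≤ 2) :
    {x : ℝ | 0 < arccos (c - cos x) ∧ arccos (c - cos x) < x ∧ x < π / 2} =
      Ioo (arccos (c / 2)) (arccos (c - 1)) := by
  have hπ := pi_pos
  have hc1 : c - 1 ∈ Icc (-1) 1 := ⟨by linarith, by linarith⟩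
  have hc2 : c / 2 ∈ Icc (-1) 1 := ⟨by linarith, by linarith⟩
  ext x
  simp only [mem_ofPred_eq, mem_Ioo]
  constructor
  · rintro ⟨hpos, hlt, hx⟩
    have hx₀ : 0 < x := (arccos_nonneg _).trans_lt hlt
    have hcos_gt : c - 1 < cos x := by linarith [arccos_pos.1 hpos]
    have hcos_lt : cos x < c - cos x :=
      (arccos_lt_iff_cos_lt ⟨by linarith [cos_le_one x], by linarith⟩ hx₀.le (by linarith)).1 hlt
    exact ⟨(arccos_lt_iff_cos_lt hc2 hx₀.le (by linarith)).2 (by linarith),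
      (lt_arccos_iff_lt_cos hc1 hx₀.le (by linarith)).2 hcos_gt⟩
  · rintro ⟨hlo, hhi⟩
    have hx₀ : 0 < x := (arccos_nonneg _).trans_lt hlo
    have hx : x < π / 2 := hhi.trans_le (arccos_le_pi_div_two.2 (by linarith))
    have hcos_gt := (lt_arccos_iff_lt_cos hc1 hx₀.le (by linarith)).1 hhi
    have hcos_lt := (arccos_lt_iff_cos_lt hc2 hx₀.le (by linarith)).1 hlo
    refine ⟨arccos_pos.2 (by linarith), ?_, hx⟩
    exact (arccos_lt_iff_cos_lt ⟨by linarith [cos_le_one x], by linarith⟩ hx₀.le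
      (by linarith)).2 (by linarith)

end Real

theorem phi_concave_general (b lam : ℝ)
    (h1 : 1 ≤ 1 / (lam * b)) (h2 : 1 / (lam * b) ≤ 3 / 2) :
    ConcaveOn ℝ
      {x : ℝ | 0 < Real.arccos (1 / (lam * b) - Real.cos x) ∧
        Real.arccos (1 / (lam * b) - Real.cos x) < x ∧ x < Real.pi / 2}
      (fun x => Real.arccos (1 / (lam * b) - Real.cos x)) := by
  set c := 1 / (lam * b)
  rw [setOf_arccos_sub_cos_eq_Ioo h1 (by linarith)]
  refine concaveOn_arccos_sub_cos (convex_Ioo _ _) (fun x hx => ⟨?_, ?_⟩) (fun x hx => ⟨?_, ?_⟩)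
  · exact (arccos_nonneg _).trans hx.1.le
  · exact hx.2.le.trans (arccos_le_pi_div_two.2 (by linarith))
  · linarith [cos_le_one x]
  · have hx₀ : 0 ≤ x := (arccos_nonneg _).trans hx.1.le
    have hxπ : x ≤ π := hx.2.le.trans (arccos_le_pi _)
    linarith [(lt_arccos_iff_lt_cos ⟨by linarith, by linarith⟩ hx₀ hxπ).1 hx.2]

theorem phi_concave (b lam : ℝ) (hb : 0 < b) (hlam : 0 < lam)
    (h1 : 1 ≤ 1 / (lam * b)) (h2 : 1 / (lam * b) ≤ 3 / 2) :
    ConcaveOn ℝ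
      {x : ℝ | 0 < Real.arccos (1 / (lam * b) - Real.cos x) ∧
        Real.arccos (1 / (lam * b) - Real.cos x) < x ∧ x < Real.pi / 2}
      (fun x => Real.arccos (1 / (lam * b) - Real.cos x)) :=
  phi_concave_general b lam h1 h2
end

section
/- Suppose a quadratic form on ℝ^N is given by a diagonal matrix with eigenvalues λ₁ < 0 < λ₂ ≤ ⋯ ≤ λ_N. Then the form is nonnegative on the hyperplane orthogonal to the vector (x₁, …, x_N) (with all x_i ≠ 0) if and only if ∑_{i=1}^N x_i²/λ_i ≤ 0. -/
/-!
Split off the negative coordinate `i₀` and put `S = ∑_{i ≠ i₀} xᵢ²/λᵢ`. On the positive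
coordinates the weighted Cauchy–Schwarz inequality `(∑ xᵢ dᵢ)² ≤ S · ∑ λᵢ dᵢ²` holds, with
equality at `dᵢ = xᵢ/λᵢ`. On the hyperplane `∑_{i ≠ i₀} xᵢ dᵢ = -x_{i₀} d_{i₀}`, so the form is
nonnegative there exactly when `x_{i₀}² + λ_{i₀} S ≥ 0`, which after division by `λ_{i₀} < 0`
is `∑ xᵢ²/λᵢ ≤ 0`.
-/

open Finset

theorem Finset.sq_sum_mul_le_sum_sq_div_mul_sum_mul_sq {ι : Type*} (s : Finset ι)
    {lam x d : ι → ℝ} (hlam : ∀ i ∈ s, 0 < lam i) :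
    (∑ i ∈ s, x i * d i) ^ 2 ≤ (∑ i ∈ s, x i ^ 2 / lam i) * ∑ i ∈ s, lam i * d i ^ 2 := by
  refine sum_sq_le_sum_mul_sum_of_sq_le_mul s (fun i hi => by have := hlam i hi; positivity)
    (fun i hi => by have := hlam i hi; positivity) fun i hi => le_of_eq ?_
  have := (hlam i hi).ne'
  field_simp

section OneNegativeEigenvalue

variable {ι : Type*} [Fintype ι] [DecidableEq ι] {lam x : ι → ℝ} {i₀ : ι}

theorem sum_mul_sq_nonneg_of_sum_mul_eq_zero (hneg : lam i₀ < 0) (hpos : ∀ i, i ≠ i₀ → 0 < lam i)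
    (hx : x i₀ ≠ 0) (h : ∑ i, x i ^ 2 / lam i ≤ 0) {d : ι → ℝ} (hd : ∑ i, x i * d i = 0) :
    0 ≤ ∑ i, lam i * d i ^ 2 := by
  have hpos' : ∀ i ∈ ({i₀}ᶜ : Finset ι), 0 < lam i := fun i hi => hpos i (by simpa using hi)
  rw [Fintype.sum_eq_add_sum_compl i₀] at h hd ⊢
  set S := ∑ i ∈ {i₀}ᶜ, x i ^ 2 / lam i
  set T := ∑ i ∈ {i₀}ᶜ, lam i * d i ^ 2
  have hT : 0 ≤ T := sum_nonneg fun i hi => by have := hpos' i hi; positivity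
  have hCS : (x i₀ * d i₀) ^ 2 ≤ S * T := by
    rw [eq_neg_of_add_eq_zero_left hd, neg_sq]
    exact sq_sum_mul_le_sum_sq_div_mul_sum_mul_sq _ hpos'
  have hkey : 0 ≤ x i₀ ^ 2 + lam i₀ * S := by
    have := (div_le_iff_of_neg hneg).1 (show x i₀ ^ 2 / lam i₀ ≤ -S by linarith)
    linarith
  have hx2 : 0 < x i₀ ^ 2 := by positivity
  -- `x₀² · Q(d) = λ₀ (x₀ d₀)² + x₀² T ≥ λ₀ S T + x₀² T = T (x₀² + λ₀ S)`
  have : 0 ≤ x i₀ ^ 2 * (lam i₀ * d i₀ ^ 2 + T) := by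
    nlinarith [mul_nonneg hT hkey, mul_le_mul_of_nonpos_left hCS hneg.le]
  exact nonneg_of_mul_nonneg_right (by linarith) hx2

theorem exists_sum_mul_eq_zero_and_sum_mul_sq_neg (hneg : lam i₀ < 0)
    (hpos : ∀ i, i ≠ i₀ → 0 < lam i) (hx : x i₀ ≠ 0) (h : 0 < ∑ i, x i ^ 2 / lam i) :
    ∃ d : ι → ℝ, ∑ i, x i * d i = 0 ∧ ∑ i, lam i * d i ^ 2 < 0 := by
  rw [Fintype.sum_eq_add_sum_compl i₀] at h
  set S := ∑ i ∈ {i₀}ᶜ, x i ^ 2 / lam i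
  have hS : 0 < S := by
    have : x i₀ ^ 2 / lam i₀ < 0 := div_neg_of_pos_of_neg (by positivity) hneg
    linarith
  have hkey : x i₀ ^ 2 + lam i₀ * S < 0 := by
    have := (lt_div_iff_of_neg hneg).1 (show -S < x i₀ ^ 2 / lam i₀ by linarith)
    linarith
  -- the equality case of Cauchy–Schwarz off `i₀`, scaled by `x i₀` to avoid dividing by it
  set d := Function.update (fun i => x i₀ * x i / lam i) i₀ (-S)
  have hd : ∀ i ∈ ({i₀}ᶜ : Finset ι), d i = x i₀ * x i / lam i := fun i hi =>
    Function.update_of_ne (by simpa using hi) _ _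
  have hd₀ : d i₀ = -S := Function.update_self ..
  refine ⟨d, ?_, ?_⟩
  · rw [Fintype.sum_eq_add_sum_compl i₀, sum_congr rfl fun i hi => by rw [hd i hi], hd₀]
    have : ∑ i ∈ {i₀}ᶜ, x i * (x i₀ * x i / lam i) = x i₀ * S := by
      rw [mul_sum]
      refine sum_congr rfl fun i _ => ?_
      ring
    linarith
  · rw [Fintype.sum_eq_add_sum_compl i₀, sum_congr rfl fun i hi => by rw [hd i hi], hd₀]
    have : ∑ i ∈ {i₀}ᶜ, lam i * (x i₀ * x i / lam i) ^ 2 = x i₀ ^ 2 * S := by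
      rw [mul_sum]
      refine sum_congr rfl fun i hi => ?_
      have := (hpos i (by simpa using hi)).ne'
      field_simp
    nlinarith [mul_neg_of_pos_of_neg hS hkey]

end OneNegativeEigenvalue

theorem quadratic_form_nonneg_on_hyperplane_iff_general (N : ℕ)
    (lam x : Fin N → ℝ)
    (hNpos : 0 < N)
    (hneg : lam ⟨0, hNpos⟩ < 0) (hpos : ∀ i : Fin N, i ≠ ⟨0, hNpos⟩ → 0 < lam i)
    (hx : ∀ i, x i ≠ 0) :
    (∀ d : Fin N → ℝ, ∑ i, x i * d i = 0 → 0 ≤ ∑ i, lam i * d i ^ 2) ↔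
      ∑ i, x i ^ 2 / lam i ≤ 0 := by
  refine ⟨fun H => ?_, fun h d => sum_mul_sq_nonneg_of_sum_mul_eq_zero hneg hpos (hx _) h⟩
  by_contra! hσ
  obtain ⟨d, hd, hQ⟩ := exists_sum_mul_eq_zero_and_sum_mul_sq_neg hneg hpos (hx _) hσ
  exact (H d hd).not_gt hQ

theorem quadratic_form_nonneg_on_hyperplane_iff (N : ℕ) (hN : 2 ≤ N)
    (lam x : Fin N → ℝ) (hmono : Monotone lam)
    (hNpos : 0 < N)
    (hneg : lam ⟨0, hNpos⟩ < 0) (hpos : ∀ i : Fin N, i ≠ ⟨0, hNpos⟩ → 0 < lam i)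
    (hx : ∀ i, x i ≠ 0) :
    (∀ d : Fin N → ℝ, ∑ i, x i * d i = 0 → 0 ≤ ∑ i, lam i * d i ^ 2) ↔
      ∑ i, x i ^ 2 / lam i ≤ 0 :=
  quadratic_form_nonneg_on_hyperplane_iff_general N lam x hNpos hneg hpos hx
end
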